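/- arXiv:2206.03095 — 3 statements merged into one kernel-verified Lean document; each statement's English description precedes it below -/
import Mathlib

section
/- Fix constants l₁, l₂ > 0, K > 0, x > 0, k₂ > 1, and θ ∈ [0,1). Then the equation l₂·t^(k₂-1)·(K·k₂/(k₂-1))^(1-k₂)·x^(k₂) + l₁ = (1-θ)/(t-θ) admits exactly one solution t with t > θ. -/
open Real

/-- The consistency (NCE) condition
l₂·t^(k₂−1)·(K·k₂/(k₂−1))^(1−k₂)·x^(k₂) + l₁ = (1−θ)/(t−θ) has exactly one
solution t > θ. -/
theorem stmt_2 (l₁ l₂ K x k₂ θ : ℝ) (hl₁ : 0 < l₁) (hl₂ : 0 < l₂) (hK : 0 < K)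
    (hx : 0 < x) (hk₂ : 1 < k₂) (hθ0 : 0 ≤ θ) (hθ1 : θ < 1) :
    ∃! t : ℝ, θ < t ∧
      l₂ * t ^ (k₂ - 1) * (K * k₂ / (k₂ - 1)) ^ (1 - k₂) * x ^ k₂ + l₁
        = (1 - θ) / (t - θ) := by
  have hk1 : 0 < k₂ - 1 := by linarith
  set C : ℝ := (K * k₂ / (k₂ - 1)) ^ (1 - k₂) * x ^ k₂ with hCdef
  have hCpos : 0 < C := by
    apply mul_pos
    · exact Real.rpow_pos_of_pos (div_pos (mul_pos hK (by linarith)) hk1) _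
    · exact Real.rpow_pos_of_pos hx _
  set F : ℝ → ℝ := fun t => (l₂ * t ^ (k₂ - 1) * C + l₁) * (t - θ) with hFdef
  -- strict monotonicity on [θ, ∞)
  have hmono : StrictMonoOn F (Set.Ici θ) := by
    intro a ha b hb hab
    have ha' : θ ≤ a := ha
    have hb' : θ ≤ b := hb
    have ha0 : 0 ≤ a := le_trans hθ0 ha'
    have hb0 : 0 ≤ b := le_trans hθ0 hb'
    have hr : a ^ (k₂ - 1) ≤ b ^ (k₂ - 1) :=
      Real.rpow_le_rpow ha0 hab.le hk1.le
    have h1 : l₂ * a ^ (k₂ - 1) * C + l₁ ≤ l₂ * b ^ (k₂ - 1) * C + l₁ := by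
      have := mul_le_mul_of_nonneg_right (mul_le_mul_of_nonneg_left hr hl₂.le) hCpos.le
      linarith
    have hbr : 0 ≤ b ^ (k₂ - 1) := Real.rpow_nonneg hb0 _
    have h2 : 0 < l₂ * b ^ (k₂ - 1) * C + l₁ := by
      have := mul_nonneg (mul_nonneg hl₂.le hbr) hCpos.le
      linarith
    exact mul_lt_mul' h1 (by linarith) (by linarith) h2
  -- continuity
  have hrc : Continuous fun t : ℝ => t ^ (k₂ - 1) :=
    continuous_iff_continuousAt.mpr fun y =>
      Real.continuousAt_rpow_const y _ (Or.inr hk1.le)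
  have hcont : Continuous F :=
    (((continuous_const.mul hrc).mul continuous_const).add continuous_const).mul
      (continuous_id.sub continuous_const)
  -- endpoints
  set b : ℝ := θ + (1 - θ) / l₁ with hbdef
  have hθb : θ ≤ b := by
    have : 0 < (1 - θ) / l₁ := div_pos (by linarith) hl₁
    rw [hbdef]; linarith
  have hb0 : 0 ≤ b := le_trans hθ0 hθb
  have hFθ : F θ = 0 := by simp [hFdef]
  have hFb : 1 - θ ≤ F b := by
    have h1 : 0 ≤ l₂ * b ^ (k₂ - 1) * C :=
      mul_nonneg (mul_nonneg hl₂.le (Real.rpow_nonneg hb0 _)) hCpos.le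
    have h2 : l₁ * ((1 - θ) / l₁) = 1 - θ := by field_simp
    have h3 : F b = (l₂ * b ^ (k₂ - 1) * C + l₁) * ((1 - θ) / l₁) := by
      simp only [hFdef, hbdef]; ring
    have h4 : 0 < (1 - θ) / l₁ := div_pos (by linarith) hl₁
    nlinarith [mul_nonneg h1 h4.le]
  -- IVT
  have hsub := intermediate_value_Icc hθb hcont.continuousOn
  have hmem : (1 - θ) ∈ Set.Icc (F θ) (F b) := by
    constructor
    · rw [hFθ]; linarith
    · exact hFb
  obtain ⟨t, ht, hFt⟩ := hsub hmem
  have htθ : θ < t := by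
    rcases lt_or_eq_of_le ht.1 with h | h
    · exact h
    · exfalso; rw [← h] at hFt; rw [hFθ] at hFt; linarith
  -- equivalence between F t = 1 - θ and the original equation
  have key : ∀ s : ℝ, θ < s →
      ((l₂ * s ^ (k₂ - 1) * (K * k₂ / (k₂ - 1)) ^ (1 - k₂) * x ^ k₂ + l₁
        = (1 - θ) / (s - θ)) ↔ F s = 1 - θ) := by
    intro s hs
    have hs0 : (0:ℝ) < s - θ := by linarith
    rw [eq_div_iff (ne_of_gt hs0)]
    constructor <;> intro h <;> [skip; skip] <;>
      · simp only [hFdef, hCdef] at *; nlinarith [h]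
  refine ⟨t, ⟨htθ, (key t htθ).mpr hFt⟩, ?_⟩
  rintro s ⟨hsθ, hseq⟩
  have hFs : F s = 1 - θ := (key s hsθ).mp hseq
  exact hmono.injOn (le_of_lt hsθ) (le_of_lt htθ) (by rw [hFs, hFt])
end

section
/- Let p, q be probability densities on a measure space with Kullback–Leibler divergence D(p‖q). Then the L¹-distance satisfies ∫|p − q| ≤ 2·√(1 − exp(−D(p‖q))), and consequently ∫|p − q| ≤ √(2·D(p‖q)). -/
/-!
Bretagnolle–Huber: with `m = ∫ min p q` and `M = ∫ max p q` one has `∫ |p - q| = M - m` and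
`m + M = 2`, while Cauchy–Schwarz gives `(∫ √(p q))² ≤ m M`; hence
`(∫ |p - q|)² ≤ 4 - 4 (∫ √(p q))²`. Jensen's inequality for `exp` under `p dμ`, applied to
`-½ log (p/q)`, bounds the Hellinger affinity `∫ √(p q)` below by `exp (-D/2)`.

Pinsker: the elementary inequality `3 (t - 1)² ≤ (2t + 4) (t log t - t + 1)` turns, after
Cauchy–Schwarz, into `(∫ |p - q|)² ≤ (∫ (2p + 4q)/3) · D = 2 D`.
-/

open MeasureTheory Real InformationTheory Set

lemma two_mul_sub_one_le_add_one_mul_log {t : ℝ} (ht : 1 ≤ t) :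
    2 * (t - 1) ≤ (t + 1) * log t := by
  rcases ht.eq_or_lt with rfl | ht
  · simp
  have h := lt_log_one_add_of_pos (sub_pos.2 ht)
  rw [add_sub_cancel, div_lt_iff₀ (by linarith)] at h
  linarith

lemma add_one_mul_log_le_two_mul_sub_one {t : ℝ} (ht₀ : 0 < t) (ht : t ≤ 1) :
    (t + 1) * log t ≤ 2 * (t - 1) := by
  have h := two_mul_sub_one_le_add_one_mul_log (one_le_inv₀ ht₀ |>.2 ht)
  rw [log_inv] at h
  have h' := mul_le_mul_of_nonneg_left h ht₀.le
  field_simp at h'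
  linarith

lemma hasDerivAt_mul_klFun_sub_sq {t : ℝ} (ht : t ≠ 0) :
    HasDerivAt (fun t => (2 * t + 4) * klFun t - 3 * (t - 1) ^ 2)
      (4 * ((t + 1) * log t - 2 * (t - 1))) t := by
  have h := ((((hasDerivAt_id t).const_mul 2).add_const 4).mul (hasDerivAt_klFun ht)).sub
    ((((hasDerivAt_id t).sub_const 1).pow 2).const_mul 3)
  exact h.congr_deriv (by simp only [klFun_apply, id]; ring)

lemma three_mul_sub_one_sq_le_mul_klFun {t : ℝ} (ht : 0 ≤ t) :
    3 * (t - 1) ^ 2 ≤ (2 * t + 4) * klFun t := by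
  set G : ℝ → ℝ := fun t => (2 * t + 4) * klFun t - 3 * (t - 1) ^ 2
  have hG : Continuous G := by fun_prop
  set G' : ℝ → ℝ := fun x => 4 * ((x + 1) * log x - 2 * (x - 1))
  have hG' (x : ℝ) (hx : 0 < x) {s : Set ℝ} : HasDerivWithinAt G (G' x) s x :=
    (hasDerivAt_mul_klFun_sub_sq hx.ne').hasDerivWithinAt
  -- `G'` has the sign of `t - 1`, so `G` is minimal at `1`, where it vanishes.
  suffices G 1 ≤ G t by simpa [G, klFun_one] using this
  rcases le_total t 1 with ht1 | ht1
  · have hanti : AntitoneOn G (Icc 0 1) := by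
      refine antitoneOn_of_hasDerivWithinAt_nonpos (f' := G') (convex_Icc 0 1)
        hG.continuousOn ?_ ?_ <;>
        intro x hx <;> rw [interior_Icc] at hx
      · exact hG' x hx.1
      · linarith [add_one_mul_log_le_two_mul_sub_one hx.1 hx.2.le]
    exact hanti ⟨ht, ht1⟩ ⟨zero_le_one, le_rfl⟩ ht1
  · have hmono : MonotoneOn G (Ici 1) := by
      refine monotoneOn_of_hasDerivWithinAt_nonneg (f' := G') (convex_Ici 1)
        hG.continuousOn ?_ ?_ <;>
        intro x hx <;> rw [interior_Ici] at hx
      · exact hG' x (zero_lt_one.trans hx)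
      · linarith [two_mul_sub_one_le_add_one_mul_log hx.le]
    exact hmono self_mem_Ici ht1 ht1

lemma sq_sub_div_le_log_div_mul_sub_add {a b : ℝ} (ha : 0 ≤ a) (hb : 0 ≤ b)
    (hab : a ≠ 0 → 0 < b) :
    (a - b) ^ 2 / ((2 * a + 4 * b) / 3) ≤ log (a / b) * a - a + b := by
  rcases hb.eq_or_lt with rfl | hb
  · obtain rfl : a = 0 := by_contra fun h => (hab h).false
    simp
  have h := three_mul_sub_one_sq_le_mul_klFun (div_nonneg ha hb.le)
  rw [klFun_apply] at h
  rw [div_le_iff₀ (by positivity)]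
  have h' := mul_le_mul_of_nonneg_left h (sq_nonneg b)
  field_simp at h' ⊢
  linear_combination h'

lemma mul_exp_neg_log_div_div_two {a b : ℝ} (ha : 0 ≤ a) (hab : a ≠ 0 → 0 < b) :
    a * exp (-log (a / b) / 2) = √(a * b) := by
  rcases ha.eq_or_lt with rfl | ha
  · simp
  have hb := hab ha.ne'
  rw [neg_div, ← log_sqrt (div_pos ha hb).le, ← log_inv, exp_log (by positivity), ← sqrt_inv,
    inv_div, eq_comm, sqrt_eq_iff_mul_self_eq_of_pos (by positivity), mul_mul_mul_comm,
    mul_self_sqrt (div_pos hb ha).le]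
  field_simp

section
variable {α : Type*} [MeasurableSpace α] {μ : Measure α} {f g p q : α → ℝ}

lemma MeasureTheory.Integrable.sqrt_mul (hf : Integrable f μ) (hg : Integrable g μ) :
    Integrable (fun x => √(f x * g x)) μ := by
  refine ((hf.norm.add hg.norm).div_const 2).mono' (by fun_prop) (ae_of_all _ fun x => ?_)
  simp only [Pi.add_apply, norm_eq_abs, abs_of_nonneg (sqrt_nonneg _)]
  rw [sqrt_le_iff]
  refine ⟨by positivity, ?_⟩
  nlinarith [sq_nonneg (|f x| - |g x|), le_abs_self (f x * g x), abs_mul (f x) (g x)]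

lemma integral_sqrt_mul_le (hf₀ : 0 ≤ᵐ[μ] f) (hg₀ : 0 ≤ᵐ[μ] g) (hf : Integrable f μ)
    (hg : Integrable g μ) :
    ∫ x, √(f x * g x) ∂μ ≤ √(∫ x, f x ∂μ) * √(∫ x, g x ∂μ) := by
  have hmemLp {h : α → ℝ} (h₀ : 0 ≤ᵐ[μ] h) (hh : Integrable h μ) :
      MemLp (fun x => √(h x)) (ENNReal.ofReal 2) μ := by
    rw [ENNReal.ofReal_ofNat, memLp_two_iff_integrable_sq (by fun_prop)]
    refine hh.congr ?_
    filter_upwards [h₀] with x hx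
    rw [sq_sqrt hx]
  have hsq {h : α → ℝ} (h₀ : 0 ≤ᵐ[μ] h) : ∫ x, √(h x) ^ (2 : ℝ) ∂μ = ∫ x, h x ∂μ := by
    refine integral_congr_ae ?_
    filter_upwards [h₀] with x hx
    rw [rpow_two, sq_sqrt hx]
  have := integral_mul_le_Lp_mul_Lq_of_nonneg Real.HolderConjugate.two_two
    (ae_of_all _ fun x => sqrt_nonneg (f x)) (ae_of_all _ fun x => sqrt_nonneg (g x))
    (hmemLp hf₀ hf) (hmemLp hg₀ hg)
  rw [hsq hf₀, hsq hg₀, ← sqrt_eq_rpow, ← sqrt_eq_rpow] at this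
  refine le_of_eq_of_le (integral_congr_ae ?_) this
  filter_upwards [hf₀] with x hx
  rw [sqrt_mul hx]

-- Jensen's inequality, via the tangent line of `exp` at `∫ p f`.
lemma exp_integral_mul_le_integral_mul_exp (hp₀ : 0 ≤ᵐ[μ] p) (hp : Integrable p μ)
    (hp₁ : ∫ x, p x ∂μ = 1) (hpf : Integrable (fun x => p x * f x) μ)
    (hpef : Integrable (fun x => p x * exp (f x)) μ) :
    exp (∫ x, p x * f x ∂μ) ≤ ∫ x, p x * exp (f x) ∂μ := by
  set c := ∫ x, p x * f x ∂μ
  have hsub : Integrable (fun x => p x * f x - c * p x) μ := hpf.sub (hp.const_mul c)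
  have htangent : ∀ᵐ x ∂μ, exp c * (p x * f x - c * p x + p x) ≤ p x * exp (f x) := by
    filter_upwards [hp₀] with x hx
    have h : exp c * (f x - c + 1) ≤ exp (f x) :=
      calc exp c * (f x - c + 1) ≤ exp c * exp (f x - c) := by
            gcongr; exact add_one_le_exp _
        _ = exp (f x) := by rw [← exp_add, add_sub_cancel]
    linear_combination mul_le_mul_of_nonneg_left h hx
  calc exp c = ∫ x, exp c * (p x * f x - c * p x + p x) ∂μ := by
        rw [integral_const_mul, integral_add hsub hp, integral_sub hpf (hp.const_mul c),
          integral_const_mul, hp₁]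
        ring
    _ ≤ ∫ x, p x * exp (f x) ∂μ :=
        integral_mono_ae ((hsub.add hp).const_mul _) hpef htangent

lemma sq_integral_abs_sub_add_four_mul_sq_integral_sqrt_mul_le (hf₀ : 0 ≤ᵐ[μ] f)
    (hg₀ : 0 ≤ᵐ[μ] g) (hf : Integrable f μ) (hg : Integrable g μ) :
    (∫ x, |f x - g x| ∂μ) ^ 2 + 4 * (∫ x, √(f x * g x) ∂μ) ^ 2
      ≤ (∫ x, f x ∂μ + ∫ x, g x ∂μ) ^ 2 := by
  have hmin : Integrable (fun x => min (f x) (g x)) μ := hf.inf hg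
  have hmax : Integrable (fun x => max (f x) (g x)) μ := hf.sup hg
  have hmin₀ : ∀ᵐ x ∂μ, 0 ≤ min (f x) (g x) := by
    filter_upwards [hf₀, hg₀] with x hfx hgx using le_min hfx hgx
  have hmax₀ : ∀ᵐ x ∂μ, 0 ≤ max (f x) (g x) := by
    filter_upwards [hf₀] with x hfx using le_max_of_le_left hfx
  have habs : ∫ x, |f x - g x| ∂μ = ∫ x, max (f x) (g x) ∂μ - ∫ x, min (f x) (g x) ∂μ := by
    rw [← integral_sub hmax hmin]
    exact integral_congr_ae (ae_of_all _ fun x => (max_sub_min_eq_abs' _ _).symm)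
  have hsum : ∫ x, f x ∂μ + ∫ x, g x ∂μ
      = ∫ x, max (f x) (g x) ∂μ + ∫ x, min (f x) (g x) ∂μ := by
    rw [← integral_add hf hg, ← integral_add hmax hmin]
    exact integral_congr_ae (ae_of_all _ fun x => (max_add_min _ _).symm)
  have hsqrt : ∫ x, √(f x * g x) ∂μ ≤
      √(∫ x, min (f x) (g x) ∂μ) * √(∫ x, max (f x) (g x) ∂μ) := by
    simpa only [min_mul_max] using integral_sqrt_mul_le hmin₀ hmax₀ hmin hmax
  have hm := integral_nonneg_of_ae hmin₀
  have hM := integral_nonneg_of_ae hmax₀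
  have hs : 0 ≤ ∫ x, √(f x * g x) ∂μ := integral_nonneg fun x => sqrt_nonneg _
  have := mul_self_le_mul_self hs hsqrt
  rw [mul_mul_mul_comm, mul_self_sqrt hm, mul_self_sqrt hM] at this
  rw [habs, hsum]
  nlinarith

lemma exp_neg_half_integral_log_div_mul_le_integral_sqrt_mul (hp₀ : 0 ≤ᵐ[μ] p)
    (hp : Integrable p μ) (hq : Integrable q μ) (hp₁ : ∫ x, p x ∂μ = 1)
    (hD : Integrable (fun x => log (p x / q x) * p x) μ) (hpq : ∀ᵐ x ∂μ, p x ≠ 0 → 0 < q x) :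
    exp (-(∫ x, log (p x / q x) * p x ∂μ) / 2) ≤ ∫ x, √(p x * q x) ∂μ := by
  have hmul : (fun x => p x * (-log (p x / q x) / 2)) = fun x => -(log (p x / q x) * p x) / 2 := by
    ext x; ring
  have hexp : (fun x => p x * exp (-log (p x / q x) / 2)) =ᵐ[μ] fun x => √(p x * q x) := by
    filter_upwards [hp₀, hpq] with x hpx hqx using mul_exp_neg_log_div_div_two hpx hqx
  have h := exp_integral_mul_le_integral_mul_exp hp₀ hp hp₁ (hmul ▸ hD.neg.div_const 2)
    ((hp.sqrt_mul hq).congr hexp.symm)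
  rwa [hmul, integral_congr_ae hexp, integral_div, integral_neg] at h

lemma integral_abs_sub_le_two_mul_sqrt_one_sub_exp_neg (hp₀ : 0 ≤ᵐ[μ] p) (hq₀ : 0 ≤ᵐ[μ] q)
    (hp : Integrable p μ) (hq : Integrable q μ) (hp₁ : ∫ x, p x ∂μ = 1) (hq₁ : ∫ x, q x ∂μ = 1)
    (hD : Integrable (fun x => log (p x / q x) * p x) μ) (hpq : ∀ᵐ x ∂μ, p x ≠ 0 → 0 < q x) :
    ∫ x, |p x - q x| ∂μ ≤ 2 * √(1 - exp (-∫ x, log (p x / q x) * p x ∂μ)) := by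
  set D := ∫ x, log (p x / q x) * p x ∂μ
  have hlecam := sq_integral_abs_sub_add_four_mul_sq_integral_sqrt_mul_le hp₀ hq₀ hp hq
  have hjensen := exp_neg_half_integral_log_div_mul_le_integral_sqrt_mul hp₀ hp hq hp₁ hD hpq
  have hexp : exp (-D) = exp (-D / 2) ^ 2 := by rw [← exp_nat_mul]; ring_nf
  have hsq : exp (-D) ≤ (∫ x, √(p x * q x) ∂μ) ^ 2 := by
    rw [hexp]; gcongr
  rw [hp₁, hq₁] at hlecam
  rw [← div_le_iff₀' two_pos]
  refine le_sqrt_of_sq_le ?_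
  linarith

lemma integral_abs_sub_le_sqrt_two_mul_integral_log_div_mul (hp₀ : 0 ≤ᵐ[μ] p)
    (hq₀ : 0 ≤ᵐ[μ] q) (hp : Integrable p μ) (hq : Integrable q μ) (hp₁ : ∫ x, p x ∂μ = 1)
    (hq₁ : ∫ x, q x ∂μ = 1) (hD : Integrable (fun x => log (p x / q x) * p x) μ)
    (hpq : ∀ᵐ x ∂μ, p x ≠ 0 → 0 < q x) :
    ∫ x, |p x - q x| ∂μ ≤ √(2 * ∫ x, log (p x / q x) * p x ∂μ) := by
  set w : α → ℝ := fun x => (2 * p x + 4 * q x) / 3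
  set h : α → ℝ := fun x => (p x - q x) ^ 2 / w x
  have hw : Integrable w μ := ((hp.const_mul 2).add (hq.const_mul 4)).div_const 3
  have hw₀ : 0 ≤ᵐ[μ] w := by
    filter_upwards [hp₀, hq₀] with x (hpx : 0 ≤ p x) (hqx : 0 ≤ q x)
    positivity
  have hw₁ : ∫ x, w x ∂μ = 2 := by
    simp only [w]
    rw [integral_div, integral_add (hp.const_mul 2) (hq.const_mul 4), integral_const_mul,
      integral_const_mul, hp₁, hq₁]
    norm_num
  have hsub : Integrable (fun x => log (p x / q x) * p x - p x) μ := hD.sub hp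
  have hkl : Integrable (fun x => log (p x / q x) * p x - p x + q x) μ := hsub.add hq
  have hkl₁ : ∫ x, log (p x / q x) * p x - p x + q x ∂μ = ∫ x, log (p x / q x) * p x ∂μ := by
    rw [integral_add hsub hq, integral_sub hD hp, hp₁, hq₁]
    ring
  have hh₀ : 0 ≤ᵐ[μ] h := by
    filter_upwards [hw₀] with x hwx using div_nonneg (sq_nonneg _) hwx
  have hh_le : ∀ᵐ x ∂μ, h x ≤ log (p x / q x) * p x - p x + q x := by
    filter_upwards [hp₀, hq₀, hpq] with x hpx hqx hpqx
      using sq_sub_div_le_log_div_mul_sub_add hpx hqx hpqx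
  have hh : Integrable h μ := by
    refine hkl.mono' ?_ ?_
    · have := hp.aemeasurable
      have := hq.aemeasurable
      fun_prop
    · filter_upwards [hh₀, hh_le] with x h₀ hle
      rwa [norm_of_nonneg h₀]
  have hwh : (fun x => √(w x * h x)) =ᵐ[μ] fun x => |p x - q x| := by
    filter_upwards [hp₀, hq₀] with x (hpx : 0 ≤ p x) (hqx : 0 ≤ q x)
    have hwh : w x * h x = (p x - q x) ^ 2 := by
      by_cases hwx : w x = 0
      · obtain ⟨hp0, hq0⟩ : p x = 0 ∧ q x = 0 := by
          simp only [w] at hwx; constructor <;> linarith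
        simp [h, hp0, hq0]
      · exact mul_div_cancel₀ _ hwx
    rw [hwh, sqrt_sq_eq_abs]
  calc ∫ x, |p x - q x| ∂μ = ∫ x, √(w x * h x) ∂μ := integral_congr_ae hwh.symm
    _ ≤ √(∫ x, w x ∂μ) * √(∫ x, h x ∂μ) := integral_sqrt_mul_le hw₀ hh₀ hw hh
    _ ≤ √2 * √(∫ x, log (p x / q x) * p x ∂μ) := by
        rw [hw₁, ← hkl₁]
        exact mul_le_mul_of_nonneg_left (sqrt_le_sqrt (integral_mono_ae hh hkl hh_le))
          (sqrt_nonneg 2)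
    _ = √(2 * ∫ x, log (p x / q x) * p x ∂μ) := (sqrt_mul zero_le_two _).symm
end

theorem stmt_8_general {E : Type*} [MeasurableSpace E] (μ : Measure E)
    (p q : E → ℝ)
    (hp_nonneg : ∀ x, 0 ≤ p x) (hq_nonneg : ∀ x, 0 ≤ q x)
    (hp_int : Integrable p μ) (hq_int : Integrable q μ)
    (hp_one : ∫ x, p x ∂μ = 1) (hq_one : ∫ x, q x ∂μ = 1)
    (hD_int : Integrable (fun x => Real.log (p x / q x) * p x) μ)
    (hq_pos : ∀ᵐ x ∂μ, p x ≠ 0 → 0 < q x) :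
    (∫ x, |p x - q x| ∂μ)
        ≤ 2 * Real.sqrt (1 - Real.exp (-(∫ x, Real.log (p x / q x) * p x ∂μ))) ∧
    (∫ x, |p x - q x| ∂μ) ≤ Real.sqrt (2 * ∫ x, Real.log (p x / q x) * p x ∂μ) :=
  ⟨integral_abs_sub_le_two_mul_sqrt_one_sub_exp_neg (ae_of_all _ hp_nonneg)
      (ae_of_all _ hq_nonneg) hp_int hq_int hp_one hq_one hD_int hq_pos,
    integral_abs_sub_le_sqrt_two_mul_integral_log_div_mul (ae_of_all _ hp_nonneg)
      (ae_of_all _ hq_nonneg) hp_int hq_int hp_one hq_one hD_int hq_pos⟩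

/-- The Bretagnolle–Huber inequality and Pinsker-type bound: for probability
densities p, q with respect to a σ-finite measure μ, with KL divergence
D(p‖q) = ∫ ln(p/q)·p dμ, one has ∫|p−q| ≤ 2√(1−exp(−D)) and ∫|p−q| ≤ √(2D). -/
theorem stmt_8 {E : Type*} [MeasurableSpace E] (μ : Measure E) [SigmaFinite μ]
    (p q : E → ℝ) (hp_meas : Measurable p) (hq_meas : Measurable q)
    (hp_nonneg : ∀ x, 0 ≤ p x) (hq_nonneg : ∀ x, 0 ≤ q x)
    (hp_int : Integrable p μ) (hq_int : Integrable q μ)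
    (hp_one : ∫ x, p x ∂μ = 1) (hq_one : ∫ x, q x ∂μ = 1)
    (hD_int : Integrable (fun x => Real.log (p x / q x) * p x) μ)
    (hq_pos : ∀ᵐ x ∂μ, p x ≠ 0 → 0 < q x) :
    (∫ x, |p x - q x| ∂μ)
        ≤ 2 * Real.sqrt (1 - Real.exp (-(∫ x, Real.log (p x / q x) * p x ∂μ))) ∧
    (∫ x, |p x - q x| ∂μ) ≤ Real.sqrt (2 * ∫ x, Real.log (p x / q x) * p x ∂μ) :=
  stmt_8_general μ p q hp_nonneg hq_nonneg hp_int hq_int hp_one hq_one hD_int hq_pos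
end

section
/- Let k₂ > 1, β > α (so x* = K̄·k₂/(k₂−1) with K̄ > 0), x < x*, and let v(x) = (1/k₂)·(x*)^{1−k₂}·x^{k₂}. Then v satisfies βv(x) − αx·v'(x) − (1/2)σ²x²·v''(x) = 0 for all x, v(x*) = x* − K̄ = K̄/(k₂−1) (value matching), and v'(x*) = 1 (smooth fit), where x* = K̄·k₂/(k₂−1). -/
open Real

/-- Verification of the value function v(x) = (1/k₂)·(x*)^{1−k₂}·x^{k₂} for the
best-time-to-sell problem: v solves βv − αxv' − (1/2)σ²x²v'' = 0 on (0,∞), with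
value matching v(x*) = x* − K̄ = K̄/(k₂−1) and smooth fit v'(x*) = 1, where
x* = K̄·k₂/(k₂−1). -/
theorem stmt_19 (α σ β k₂ Kb : ℝ) (hσ : 0 < σ) (hβ : 0 < β) (hβα : α < β)
    (hk₂ : 1 < k₂) (hKb : 0 < Kb)
    (hroot : (1/2) * σ^2 * k₂^2 + (α - (1/2) * σ^2) * k₂ - β = 0) :
    let xstar : ℝ := Kb * k₂ / (k₂ - 1)
    let v : ℝ → ℝ := fun y => (1 / k₂) * xstar ^ (1 - k₂) * y ^ k₂
    (∀ y : ℝ, 0 < y →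
      β * v y - α * y * deriv v y - (1/2) * σ^2 * y^2 * deriv (deriv v) y = 0) ∧
    v xstar = xstar - Kb ∧
    v xstar = Kb / (k₂ - 1) ∧
    deriv v xstar = 1 := by
  intro xstar v
  have hk1 : (0:ℝ) < k₂ - 1 := by linarith
  have hk0 : (0:ℝ) < k₂ := by linarith
  have hxs : 0 < xstar := by
    have : 0 < Kb * k₂ := mul_pos hKb hk0
    exact div_pos this hk1
  set C : ℝ := (1 / k₂) * xstar ^ (1 - k₂) with hC
  -- first derivative, everywhere (since 1 ≤ k₂)
  have hd1 : ∀ y : ℝ, HasDerivAt v (C * (k₂ * y ^ (k₂ - 1))) y := by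
    intro y
    have h := (Real.hasDerivAt_rpow_const (x := y) (p := k₂) (Or.inr hk₂.le)).const_mul C
    simpa [v, hC, mul_comm, mul_assoc] using h
  have hdv : deriv v = fun y => C * k₂ * y ^ (k₂ - 1) := by
    funext y
    simpa [mul_assoc] using (hd1 y).deriv
  refine ⟨?_, ?_, ?_, ?_⟩
  · intro y hy
    have hy0 : y ≠ 0 := ne_of_gt hy
    have hd2 : HasDerivAt (fun z : ℝ => C * k₂ * z ^ (k₂ - 1))
        (C * k₂ * ((k₂ - 1) * y ^ (k₂ - 1 - 1))) y :=
      (Real.hasDerivAt_rpow_const (x := y) (p := k₂ - 1) (Or.inl hy0)).const_mul (C * k₂)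
    have hdd : deriv (deriv v) y = C * k₂ * ((k₂ - 1) * y ^ (k₂ - 1 - 1)) := by
      rw [hdv]; exact hd2.deriv
    rw [hdd, hdv]
    have e1 : y * y ^ (k₂ - 1) = y ^ k₂ := by
      calc y * y ^ (k₂ - 1) = y ^ (1:ℝ) * y ^ (k₂ - 1) := by rw [Real.rpow_one]
        _ = y ^ (1 + (k₂ - 1)) := (Real.rpow_add hy _ _).symm
        _ = y ^ k₂ := by ring_nf
    have e2 : y ^ 2 * y ^ (k₂ - 1 - 1) = y ^ k₂ := by
      calc y ^ 2 * y ^ (k₂ - 1 - 1) = y ^ ((2:ℕ):ℝ) * y ^ (k₂ - 1 - 1) := by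
            rw [Real.rpow_natCast]
        _ = y ^ (((2:ℕ):ℝ) + (k₂ - 1 - 1)) := (Real.rpow_add hy _ _).symm
        _ = y ^ k₂ := by congr 1; push_cast; ring
    have hv : v y = C * y ^ k₂ := rfl
    rw [hv]
    have : β * (C * y ^ k₂) - α * (y * y ^ (k₂ - 1)) * (C * k₂)
        - 1 / 2 * σ ^ 2 * (y ^ 2 * y ^ (k₂ - 1 - 1)) * (C * k₂ * (k₂ - 1)) = 0 := by
      rw [e1, e2]
      have h0 : β - α * k₂ - 1 / 2 * σ ^ 2 * (k₂ * (k₂ - 1)) = 0 := by linarith [hroot]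
      linear_combination C * y ^ k₂ * h0
    linarith [this]
  · -- v xstar = xstar - Kb
    have hvx : v xstar = xstar / k₂ := by
      show (1 / k₂) * xstar ^ (1 - k₂) * xstar ^ k₂ = xstar / k₂
      rw [mul_assoc, ← Real.rpow_add hxs,
        show (1 - k₂ + k₂) = (1:ℝ) by ring, Real.rpow_one]
      ring
    rw [hvx]
    show Kb * k₂ / (k₂ - 1) / k₂ = Kb * k₂ / (k₂ - 1) - Kb
    field_simp
    ring
  · have hvx : v xstar = xstar / k₂ := by
      show (1 / k₂) * xstar ^ (1 - k₂) * xstar ^ k₂ = xstar / k₂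
      rw [mul_assoc, ← Real.rpow_add hxs,
        show (1 - k₂ + k₂) = (1:ℝ) by ring, Real.rpow_one]
      ring
    rw [hvx]
    show Kb * k₂ / (k₂ - 1) / k₂ = Kb / (k₂ - 1)
    field_simp
  · rw [hdv]
    show C * k₂ * xstar ^ (k₂ - 1) = 1
    have h1 : xstar ^ (1 - k₂) * xstar ^ (k₂ - 1) = 1 := by
      rw [← Real.rpow_add hxs]; norm_num
    calc C * k₂ * xstar ^ (k₂ - 1)
        = (1 / k₂ * k₂) * (xstar ^ (1 - k₂) * xstar ^ (k₂ - 1)) := by rw [hC]; ring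
      _ = 1 := by rw [h1]; field_simp
end
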